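/- arXiv:1901.00257 — 4 statements merged into one kernel-verified Lean document; each statement's English description precedes it below -/
import Mathlib

section
/- The Green pairing φ_0 on the extended Ringel–Hall algebra, given by φ_0([M]K_α, [N]K_β) = δ_{[M],[N]} v^{(α,β)} / a_M, is a Hopf pairing: it satisfies φ_0(xy, z) = Σ φ_0(x, z_1)φ_0(y, z_2) and φ_0(x, yz) = Σ φ_0(x_1, y)φ_0(x_2, z) for the Green comultiplication Δ([L]K_α) = Σ_{[M],[N]} v^{⟨M,N⟩} (a_M a_N / a_L) g^L_{M N} [M]K_{N̂+α} ⊗ [N]K_α. -/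
set_option linter.unusedSectionVars false
set_option maxHeartbeats 1000000


noncomputable section

variable {ι : Type*} [DecidableEq ι] {K : Type*} [AddCommGroup K] [DecidableEq K]

/-- Product of two basis elements `[M]K_α`, `[N]K_β` of the extended Ringel–Hall
algebra `H^e_v(A)` (whose underlying space is `(ι × K) →₀ ℂ`, the basis element
`(M, α)` standing for `[M]K_α`):
`([M]K_α)([N]K_β) = v^{(α,N̂)+⟨M,N⟩} Σ_L g^L_{MN} [L]K_{α+β}`. -/
def mulBasis (g : ι → ι → ι → ℕ) (cls : ι → K) (e s : K → K → ℤ) (v : ℂ)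
    (hgfin : ∀ M N : ι, (Function.support fun L => g L M N).Finite)
    (x y : ι × K) : (ι × K) →₀ ℂ :=
  (hgfin x.1 y.1).toFinset.sum fun L =>
    (v ^ (s x.2 (cls y.1) + e (cls x.1) (cls y.1)) * g L x.1 y.1) •
      Finsupp.single (L, x.2 + y.2) 1

/-- The product on `H^e_v(A)`, extended bilinearly from basis elements. -/
def mulExt (g : ι → ι → ι → ℕ) (cls : ι → K) (e s : K → K → ℤ) (v : ℂ)
    (hgfin : ∀ M N : ι, (Function.support fun L => g L M N).Finite)
    (x y : (ι × K) →₀ ℂ) : (ι × K) →₀ ℂ :=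
  x.sum fun b c => y.sum fun b' c' => (c * c') • mulBasis g cls e s v hgfin b b'

/-- Green's comultiplication on the basis element `[L]K_α`:
`Δ([L]K_α) = Σ_{[M],[N]} v^{⟨M,N⟩} (a_M a_N/a_L) g^L_{MN} [M]K_{N̂+α} ⊗ [N]K_α`,
recorded as a finitely supported function on pairs of basis elements. -/
def greenComul (g : ι → ι → ι → ℕ) (a : ι → ℕ) (cls : ι → K) (e : K → K → ℤ) (v : ℂ)
    (hcofin : ∀ L : ι, {p : ι × ι | g L p.1 p.2 ≠ 0}.Finite)
    (L : ι) (α : K) : ((ι × K) × (ι × K)) →₀ ℂ :=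
  (hcofin L).toFinset.sum fun p =>
    (v ^ e (cls p.1) (cls p.2) * (((a p.1 * a p.2 : ℕ) : ℂ) / ((a L : ℕ) : ℂ)) *
        (g L p.1 p.2 : ℂ)) •
      Finsupp.single ((p.1, cls p.2 + α), (p.2, α)) 1

/-- Green's pairing on basis elements:
`φ₀([M]K_α, [N]K_β) = δ_{[M],[N]} v^{(α,β)}/a_M`. -/
def greenPairingBasis (a : ι → ℕ) (s : K → K → ℤ) (v : ℂ) (x y : ι × K) : ℂ :=
  if x.1 = y.1 then v ^ s x.2 y.2 / ((a x.1 : ℕ) : ℂ) else 0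

/-- Green's pairing, extended bilinearly. -/
def greenPairing (a : ι → ℕ) (s : K → K → ℤ) (v : ℂ)
    (x y : (ι × K) →₀ ℂ) : ℂ :=
  x.sum fun b c => y.sum fun b' c' => c * c' * greenPairingBasis a s v b b'

section Aux
variable (a : ι → ℕ) (s : K → K → ℤ) (v : ℂ)

lemma gp_zero_left (Z : (ι × K) →₀ ℂ) : greenPairing a s v 0 Z = 0 := by
  simp [greenPairing]

lemma gp_add_left (X₁ X₂ Z : (ι × K) →₀ ℂ) :
    greenPairing a s v (X₁ + X₂) Z = greenPairing a s v X₁ Z + greenPairing a s v X₂ Z := by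
  unfold greenPairing
  apply Finsupp.sum_add_index' <;> intros <;> simp [add_mul, Finsupp.sum_add]

lemma gp_add_right (X Z₁ Z₂ : (ι × K) →₀ ℂ) :
    greenPairing a s v X (Z₁ + Z₂) = greenPairing a s v X Z₁ + greenPairing a s v X Z₂ := by
  unfold greenPairing
  rw [← Finsupp.sum_add]
  refine Finsupp.sum_congr fun b _ => ?_
  apply Finsupp.sum_add_index' <;> intros <;> simp [mul_add, add_mul]

lemma gp_smul_left (c : ℂ) (X Z : (ι × K) →₀ ℂ) :
    greenPairing a s v (c • X) Z = c * greenPairing a s v X Z := by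
  unfold greenPairing
  rw [Finsupp.sum_smul_index' (by simp), Finsupp.mul_sum]
  refine Finsupp.sum_congr fun b _ => ?_
  rw [Finsupp.mul_sum]
  refine Finsupp.sum_congr fun b' _ => ?_
  simp only [smul_eq_mul]; ring

lemma gp_smul_right (c : ℂ) (X Z : (ι × K) →₀ ℂ) :
    greenPairing a s v X (c • Z) = c * greenPairing a s v X Z := by
  unfold greenPairing
  rw [Finsupp.mul_sum]
  refine Finsupp.sum_congr fun b _ => ?_
  rw [Finsupp.sum_smul_index' (by simp), Finsupp.mul_sum]
  refine Finsupp.sum_congr fun b' _ => ?_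
  simp only [smul_eq_mul]; ring

lemma gp_single_single (b b' : ι × K) (c c' : ℂ) :
    greenPairing a s v (Finsupp.single b c) (Finsupp.single b' c') =
      c * c' * greenPairingBasis a s v b b' := by
  unfold greenPairing
  rw [Finsupp.sum_single_index (by simp), Finsupp.sum_single_index (by simp)]

lemma gp_sum_left {γ : Type*} (t : Finset γ) (F : γ → ((ι × K) →₀ ℂ)) (Z : (ι × K) →₀ ℂ) :
    greenPairing a s v (∑ i ∈ t, F i) Z = ∑ i ∈ t, greenPairing a s v (F i) Z := by
  induction t using Finset.cons_induction with
  | empty => simp [gp_zero_left]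
  | cons i t hi ih => rw [Finset.sum_cons, Finset.sum_cons, gp_add_left, ih]

lemma gp_zero_right (X : (ι × K) →₀ ℂ) : greenPairing a s v X 0 = 0 := by
  simp [greenPairing]

lemma gp_sum_right {γ : Type*} (t : Finset γ) (X : (ι × K) →₀ ℂ) (F : γ → ((ι × K) →₀ ℂ)) :
    greenPairing a s v X (∑ i ∈ t, F i) = ∑ i ∈ t, greenPairing a s v X (F i) := by
  induction t using Finset.cons_induction with
  | empty => simp [gp_zero_right]
  | cons i t hi ih => rw [Finset.sum_cons, Finset.sum_cons, gp_add_right, ih]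

lemma sum_single_sum {β γ : Type*} (t : Finset γ) (Cf : γ → ℂ) (bf : γ → β) (A₁ A₂ : β → ℂ) :
    ((∑ p ∈ t, Cf p • Finsupp.single (bf p) (1:ℂ)).sum fun b c => c * A₁ b * A₂ b) =
      ∑ p ∈ t, Cf p * A₁ (bf p) * A₂ (bf p) := by
  induction t using Finset.cons_induction with
  | empty => simp
  | cons i t hi ih =>
    rw [Finset.sum_cons, Finset.sum_cons,
      Finsupp.sum_add_index' (by simp) (fun i b₁ b₂ => by ring), ih]
    congr 1
    rw [Finsupp.smul_single, smul_eq_mul, mul_one, Finsupp.sum_single_index (by simp)]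

end Aux

section Mul
variable (g : ι → ι → ι → ℕ) (cls : ι → K) (e s : K → K → ℤ) (v : ℂ)
  (hgfin : ∀ M N : ι, (Function.support fun L => g L M N).Finite)

lemma mulExt_zero_left (y : (ι × K) →₀ ℂ) : mulExt g cls e s v hgfin 0 y = 0 := by
  simp [mulExt]

lemma mulExt_zero_right (x : (ι × K) →₀ ℂ) : mulExt g cls e s v hgfin x 0 = 0 := by
  simp [mulExt]

lemma mulExt_add_left (x₁ x₂ y : (ι × K) →₀ ℂ) :
    mulExt g cls e s v hgfin (x₁ + x₂) y =
      mulExt g cls e s v hgfin x₁ y + mulExt g cls e s v hgfin x₂ y := by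
  unfold mulExt
  apply Finsupp.sum_add_index' <;> intros <;> simp [add_mul, add_smul, Finsupp.sum_add]

lemma mulExt_add_right (x y₁ y₂ : (ι × K) →₀ ℂ) :
    mulExt g cls e s v hgfin x (y₁ + y₂) =
      mulExt g cls e s v hgfin x y₁ + mulExt g cls e s v hgfin x y₂ := by
  unfold mulExt
  rw [← Finsupp.sum_add]
  refine Finsupp.sum_congr fun b _ => ?_
  apply Finsupp.sum_add_index' <;> intros <;> simp [mul_add, add_smul]

lemma mulExt_single_single (b b' : ι × K) (c c' : ℂ) :
    mulExt g cls e s v hgfin (Finsupp.single b c) (Finsupp.single b' c') =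
      (c * c') • mulBasis g cls e s v hgfin b b' := by
  unfold mulExt
  rw [Finsupp.sum_single_index (by simp), Finsupp.sum_single_index (by simp)]

end Mul

/-- the Green pairing
`φ₀([M]K_α, [N]K_β) = δ_{[M],[N]} v^{(α,β)}/a_M` on the extended Ringel–Hall
algebra is a Hopf pairing: `φ₀(xy, z) = Σ φ₀(x, z₁)φ₀(y, z₂)` and
`φ₀(x, yz) = Σ φ₀(x₁, y)φ₀(x₂, z)` for Green's comultiplication `Δ`. -/
theorem greenPairing_is_hopf_pairing
    (g : ι → ι → ι → ℕ) (a : ι → ℕ) (cls : ι → K) (e s : K → K → ℤ) (v : ℂ)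
    (z : ι) (hv : v ≠ 0)
    (heL : ∀ α β γ' : K, e (α + β) γ' = e α γ' + e β γ')
    (heR : ∀ α β γ' : K, e α (β + γ') = e α β + e α γ')
    (hsym : ∀ α β : K, s α β = e α β + e β α)
    (ha : ∀ M : ι, a M ≠ 0)
    (hgfin : ∀ M N : ι, (Function.support fun L => g L M N).Finite)
    (hqfin : ∀ M X : ι, (Function.support fun L => g M L X).Finite)
    (hcls : ∀ L M N : ι, g L M N ≠ 0 → cls L = cls M + cls N)
    (hclsz : cls z = 0)
    (hzl : ∀ L M : ι, g L z M = if L = M then 1 else 0)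
    (hzr : ∀ L M : ι, g L M z = if L = M then 1 else 0)
    (hcomp : ∀ L M N P : ι,
      ∑ᶠ X : ι, g L M X * g X N P = ∑ᶠ X : ι, g X M N * g L X P)
    (hgreen : ∀ M N M' N' : ι,
      ((a M * a N * a M' * a N' : ℕ) : ℂ) *
          ∑ᶠ L : ι, ((g L M N * g L M' N' : ℕ) : ℂ) / ((a L : ℕ) : ℂ) =
        ∑ᶠ q : ι × ι × ι × ι,
          v ^ (-2 * e (cls q.1) (cls q.2.2.2)) *
            ((g M q.1 q.2.1 * g N q.2.2.1 q.2.2.2 * g M' q.1 q.2.2.1 *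
              g N' q.2.1 q.2.2.2 : ℕ) : ℂ) *
            ((a q.1 * a q.2.1 * a q.2.2.1 * a q.2.2.2 : ℕ) : ℂ))
    (hcofin : ∀ L : ι, {p : ι × ι | g L p.1 p.2 ≠ 0}.Finite) :
    (∀ (x y : (ι × K) →₀ ℂ) (L : ι) (α : K),
      greenPairing a s v (mulExt g cls e s v hgfin x y) (Finsupp.single (L, α) 1) =
        (greenComul g a cls e v hcofin L α).sum fun p c =>
          c * greenPairing a s v x (Finsupp.single p.1 1) *
            greenPairing a s v y (Finsupp.single p.2 1)) ∧
    (∀ (L : ι) (α : K) (y z : (ι × K) →₀ ℂ),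
      greenPairing a s v (Finsupp.single (L, α) 1) (mulExt g cls e s v hgfin y z) =
        (greenComul g a cls e v hcofin L α).sum fun p c =>
          c * greenPairing a s v (Finsupp.single p.1 1) y *
            greenPairing a s v (Finsupp.single p.2 1) z) := by
  have hsl : ∀ p q r : K, s (p + q) r = s p r + s q r := fun p q r => by
    rw [hsym, hsym, hsym, heL p q r, heR r p q]; ring
  have hsr : ∀ p q r : K, s p (q + r) = s p q + s p r := fun p q r => by
    rw [hsym, hsym, hsym, heR p q r, heL q r p]; ring
  have hss : ∀ p q : K, s p q = s q p := fun p q => by rw [hsym, hsym]; ring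
  constructor
  · intro x y L α
    induction x using Finsupp.induction_linear with
    | zero => simp [mulExt_zero_left, gp_zero_left, Finsupp.sum_fun_zero]
    | add f f' hf hf' =>
      rw [mulExt_add_left, gp_add_left, hf, hf', ← Finsupp.sum_add]
      exact Finsupp.sum_congr fun p _ => by rw [gp_add_left]; ring
    | single bx cx =>
      induction y using Finsupp.induction_linear with
      | zero => simp [mulExt_zero_right, gp_zero_left, Finsupp.sum_fun_zero]
      | add f f' hf hf' =>
        rw [mulExt_add_right, gp_add_left, hf, hf', ← Finsupp.sum_add]
        exact Finsupp.sum_congr fun p _ => by rw [gp_add_left]; ring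
      | single by' cy =>
        have haL : ((a L : ℕ) : ℂ) ≠ 0 := Nat.cast_ne_zero.mpr (ha L)
        have haM : ((a bx.1 : ℕ) : ℂ) ≠ 0 := Nat.cast_ne_zero.mpr (ha bx.1)
        have haN : ((a by'.1 : ℕ) : ℂ) ≠ 0 := Nat.cast_ne_zero.mpr (ha by'.1)
        rw [mulExt_single_single, gp_smul_left]
        simp only [mulBasis]
        rw [gp_sum_left]
        simp only [gp_smul_left, gp_single_single, greenPairingBasis, one_mul, mul_one]
        simp only [greenComul]
        rw [sum_single_sum]
        simp only [gp_single_single, greenPairingBasis, one_mul, mul_one]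
        rw [Finset.sum_eq_single (bx.1, by'.1)]
        · simp only [if_pos rfl]
          simp only [mul_ite, mul_zero]
          rw [Finset.sum_ite_eq']
          by_cases hg : g L bx.1 by'.1 = 0
          · simp [hg]
          · rw [if_pos ((hgfin bx.1 by'.1).mem_toFinset.mpr hg)]
            rw [hsl bx.2 by'.2 α, hsr bx.2 (cls by'.1) α,
              zpow_add₀ hv, zpow_add₀ hv, zpow_add₀ hv]
            push_cast
            field_simp
        · intro p hp hne
          by_cases h1 : bx.1 = p.1
          · by_cases h2 : by'.1 = p.2
            · exact absurd (Prod.ext h1.symm h2.symm) (by simpa [eq_comm] using hne)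
            · simp [h2]
          · simp [h1]
        · intro hnotmem
          have hg0 : g L bx.1 by'.1 = 0 := by
            by_contra h
            exact hnotmem ((hcofin L).mem_toFinset.mpr h)
          simp [hg0]
  · intro L α y' z'
    induction y' using Finsupp.induction_linear with
    | zero => simp [mulExt_zero_left, gp_zero_right, Finsupp.sum_fun_zero]
    | add f f' hf hf' =>
      rw [mulExt_add_left, gp_add_right, hf, hf', ← Finsupp.sum_add]
      exact Finsupp.sum_congr fun p _ => by rw [gp_add_right]; ring
    | single by' cy =>
      induction z' using Finsupp.induction_linear with
      | zero => simp [mulExt_zero_right, gp_zero_right, Finsupp.sum_fun_zero]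
      | add f f' hf hf' =>
        rw [mulExt_add_right, gp_add_right, hf, hf', ← Finsupp.sum_add]
        exact Finsupp.sum_congr fun p _ => by rw [gp_add_right]; ring
      | single bz cz =>
        have haL : ((a L : ℕ) : ℂ) ≠ 0 := Nat.cast_ne_zero.mpr (ha L)
        have haM : ((a by'.1 : ℕ) : ℂ) ≠ 0 := Nat.cast_ne_zero.mpr (ha by'.1)
        have haN : ((a bz.1 : ℕ) : ℂ) ≠ 0 := Nat.cast_ne_zero.mpr (ha bz.1)
        rw [mulExt_single_single, gp_smul_right]
        simp only [mulBasis]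
        rw [gp_sum_right]
        simp only [gp_smul_right, gp_single_single, greenPairingBasis, one_mul, mul_one]
        simp only [greenComul]
        rw [sum_single_sum]
        simp only [gp_single_single, greenPairingBasis, one_mul, mul_one]
        rw [Finset.sum_eq_single (by'.1, bz.1)]
        · simp only [if_pos rfl]
          simp only [mul_ite, mul_zero]
          rw [Finset.sum_ite_eq]
          by_cases hg : g L by'.1 bz.1 = 0
          · simp [hg]
          · rw [if_pos ((hgfin by'.1 bz.1).mem_toFinset.mpr hg)]
            rw [hsr α by'.2 bz.2, hsl (cls bz.1) α by'.2, hss by'.2 (cls bz.1),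
              zpow_add₀ hv, zpow_add₀ hv, zpow_add₀ hv]
            push_cast
            field_simp
        · intro p hp hne
          by_cases h1 : p.1 = by'.1
          · by_cases h2 : p.2 = bz.1
            · exact absurd (Prod.ext h1 h2) hne
            · simp [h2]
          · simp [h1]
        · intro hnotmem
          have hg0 : g L by'.1 bz.1 = 0 := by
            by_contra h
            exact hnotmem ((hcofin L).mem_toFinset.mpr h)
          simp [hg0]

end
end

section
/- Let m = 0 or m > 2 and i ∈ Z_m. The assignment 𝒦⁺_α ↦ K_{α,i+1}, 𝒦⁻_α ↦ K_{α,i}, μ⁺_M ↦ e_{M,i+1}, μ⁻_M ↦ e_{M,i} extends to an algebra homomorphism from the Heisenberg double Hall algebra HD(A) into the Bridgeland Hall algebra DH_m(A), i.e. the defining relations (2.3)–(2.7) of HD(A) are consequences of the defining relations (4.1)–(4.5) of DH_m(A). -/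
noncomputable section

open scoped TensorProduct

variable {ι : Type*} {K : Type*} [AddCommGroup K]

/-- `gammaHall g a M N X Y = γ^{XY}_{MN} = (a_X a_Y/(a_M a_N)) Σ_{[L]} a_L g^M_{L X} g^N_{Y L}`,
where `g L M N = g^L_{M N}` are the Hall numbers and `a X = |Aut X|`. -/
def gammaHall (g : ι → ι → ι → ℕ) (a : ι → ℕ) (M N X Y : ι) : ℂ :=
  ((a X * a Y : ℕ) : ℂ) / ((a M * a N : ℕ) : ℂ) *
    ∑ᶠ L : ι, ((a L * g M L X * g N Y L : ℕ) : ℂ)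

/-- Generators of the Heisenberg double Hall algebra: `μ⁺_M`, `μ⁻_M`, `K⁺_α`, `K⁻_α`. -/
abbrev HDGen (ι K : Type*) := (ι ⊕ ι) ⊕ (K ⊕ K)

variable (ι K) in
/-- `μ⁺_M` as an element of the free algebra. -/
def μp (M : ι) : FreeAlgebra ℂ (HDGen ι K) := FreeAlgebra.ι ℂ (Sum.inl (Sum.inl M))
variable (ι K) in
/-- `μ⁻_M` as an element of the free algebra. -/
def μm (M : ι) : FreeAlgebra ℂ (HDGen ι K) := FreeAlgebra.ι ℂ (Sum.inl (Sum.inr M))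
variable (ι K) in
/-- `K⁺_α` as an element of the free algebra. -/
def κp (α : K) : FreeAlgebra ℂ (HDGen ι K) := FreeAlgebra.ι ℂ (Sum.inr (Sum.inl α))
variable (ι K) in
/-- `K⁻_α` as an element of the free algebra. -/
def κm (α : K) : FreeAlgebra ℂ (HDGen ι K) := FreeAlgebra.ι ℂ (Sum.inr (Sum.inr α))

/-- The defining relations (2.3)–(2.7) of the Heisenberg double Hall algebra `HD(A)`. -/
inductive HDRel (g : ι → ι → ι → ℕ) (a : ι → ℕ) (cls : ι → K) (e s : K → K → ℤ) (v : ℂ) :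
    FreeAlgebra ℂ (HDGen ι K) → FreeAlgebra ℂ (HDGen ι K) → Prop
  | hallP (M N : ι) : HDRel g a cls e s v (μp ι K M * μp ι K N)
      (∑ᶠ L : ι, (v ^ e (cls M) (cls N) * g L M N) • μp ι K L)
  | hallM (M N : ι) : HDRel g a cls e s v (μm ι K M * μm ι K N)
      (∑ᶠ L : ι, (v ^ e (cls M) (cls N) * g L M N) • μm ι K L)
  | KpMp (α : K) (M : ι) : HDRel g a cls e s v (κp ι K α * μp ι K M)
      (v ^ s α (cls M) • (μp ι K M * κp ι K α))
  | KmMm (α : K) (M : ι) : HDRel g a cls e s v (κm ι K α * μm ι K M)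
      (v ^ s α (cls M) • (μm ι K M * κm ι K α))
  | KpKp (α β : K) : HDRel g a cls e s v (κp ι K α * κp ι K β) (κp ι K (α + β))
  | KmKm (α β : K) : HDRel g a cls e s v (κm ι K α * κm ι K β) (κm ι K (α + β))
  | KpKm (α β : K) : HDRel g a cls e s v (κp ι K α * κm ι K β)
      (v ^ s α β • (κm ι K β * κp ι K α))
  | KpMm (α : K) (M : ι) : HDRel g a cls e s v (κp ι K α * μm ι K M)
      (μm ι K M * κp ι K α)
  | KmMp (α : K) (M : ι) : HDRel g a cls e s v (κm ι K α * μp ι K M)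
      (v ^ (-s α (cls M)) • (μp ι K M * κm ι K α))
  | cross (M N : ι) : HDRel g a cls e s v (μp ι K M * μm ι K N)
      (∑ᶠ p : ι × ι,
        (v ^ e (cls N - cls p.2) (cls p.1 - cls p.2) * gammaHall g a M N p.1 p.2) •
          (κm ι K (cls N - cls p.2) * μm ι K p.2 * μp ι K p.1))

/-- The Heisenberg double Hall algebra `HD(A)`. -/
def HDAlg (g : ι → ι → ι → ℕ) (a : ι → ℕ) (cls : ι → K) (e s : K → K → ℤ) (v : ℂ) : Type _ :=
  RingQuot (HDRel g a cls e s v)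

variable (g : ι → ι → ι → ℕ) (a : ι → ℕ) (cls : ι → K) (e s : K → K → ℤ) (v : ℂ)

instance : Ring (HDAlg g a cls e s v) := inferInstanceAs (Ring (RingQuot _))
instance : Algebra ℂ (HDAlg g a cls e s v) := inferInstanceAs (Algebra ℂ (RingQuot _))

/-- The generator `μ⁺_M` of `HD(A)`. -/
def HDμp (M : ι) : HDAlg g a cls e s v := RingQuot.mkAlgHom ℂ _ (μp ι K M)
/-- The generator `μ⁻_M` of `HD(A)`. -/
def HDμm (M : ι) : HDAlg g a cls e s v := RingQuot.mkAlgHom ℂ _ (μm ι K M)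
/-- The generator `K⁺_α` of `HD(A)`. -/
def HDκp (α : K) : HDAlg g a cls e s v := RingQuot.mkAlgHom ℂ _ (κp ι K α)
/-- The generator `K⁻_α` of `HD(A)`. -/
def HDκm (α : K) : HDAlg g a cls e s v := RingQuot.mkAlgHom ℂ _ (κm ι K α)

/-- Generators of the Bridgeland Hall algebra of `m`-cyclic complexes:
`e_{M,i}` and `K_{α,i}` with `i ∈ Z_m` (where `ZMod 0 = ℤ`). -/
abbrev DHmGen (ι K : Type*) (m : ℕ) := (ι × ZMod m) ⊕ (K × ZMod m)

variable (ι K) in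
/-- `e_{M,i}` as an element of the free algebra. -/
def eGen {m : ℕ} (M : ι) (i : ZMod m) : FreeAlgebra ℂ (DHmGen ι K m) :=
  FreeAlgebra.ι ℂ (Sum.inl (M, i))
variable (ι K) in
/-- `K_{α,i}` as an element of the free algebra. -/
def kGen {m : ℕ} (α : K) (i : ZMod m) : FreeAlgebra ℂ (DHmGen ι K m) :=
  FreeAlgebra.ι ℂ (Sum.inr (α, i))

/-- The defining relations (4.1)–(4.5) of the Bridgeland Hall algebra `DH_m(A)` of
`m`-cyclic complexes (for `m = 0` or `m > 2`); the condition `i = m - 1 + j` of the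
paper is rendered as `j = i + 1` in `Z_m`. -/
inductive DHmRel (m : ℕ) (g : ι → ι → ι → ℕ) (a : ι → ℕ) (cls : ι → K)
    (e s : K → K → ℤ) (v : ℂ) :
    FreeAlgebra ℂ (DHmGen ι K m) → FreeAlgebra ℂ (DHmGen ι K m) → Prop
  | KKsame (α β : K) (i : ZMod m) :
      DHmRel m g a cls e s v (kGen ι K α i * kGen ι K β i) (kGen ι K (α + β) i)
  | KKup (α β : K) (i j : ZMod m) (h : i = j + 1) :
      DHmRel m g a cls e s v (kGen ι K α i * kGen ι K β j)
        (v ^ s α β • (kGen ι K β j * kGen ι K α i))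
  | KKdown (α β : K) (i j : ZMod m) (h : j = i + 1) :
      DHmRel m g a cls e s v (kGen ι K α i * kGen ι K β j)
        (v ^ (-s α β) • (kGen ι K β j * kGen ι K α i))
  | KKother (α β : K) (i j : ZMod m) (h1 : i ≠ j) (h2 : i ≠ j + 1) (h3 : j ≠ i + 1) :
      DHmRel m g a cls e s v (kGen ι K α i * kGen ι K β j) (kGen ι K β j * kGen ι K α i)
  | Kesame (α : K) (M : ι) (i : ZMod m) :
      DHmRel m g a cls e s v (kGen ι K α i * eGen ι K M i)
        (v ^ s α (cls M) • (eGen ι K M i * kGen ι K α i))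
  | Kedown (α : K) (M : ι) (i j : ZMod m) (h : j = i + 1) :
      DHmRel m g a cls e s v (kGen ι K α i * eGen ι K M j)
        (v ^ (-s α (cls M)) • (eGen ι K M j * kGen ι K α i))
  | Keother (α : K) (M : ι) (i j : ZMod m) (h1 : i ≠ j) (h2 : j ≠ i + 1) :
      DHmRel m g a cls e s v (kGen ι K α i * eGen ι K M j) (eGen ι K M j * kGen ι K α i)
  | hall (M N : ι) (i : ZMod m) :
      DHmRel m g a cls e s v (eGen ι K M i * eGen ι K N i)
        (∑ᶠ L : ι, (v ^ e (cls M) (cls N) * g L M N) • eGen ι K L i)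
  | cross (M N : ι) (i : ZMod m) :
      DHmRel m g a cls e s v (eGen ι K M (i + 1) * eGen ι K N i)
        (∑ᶠ p : ι × ι,
          (v ^ e (cls M - cls p.1) (cls p.1 - cls p.2) * gammaHall g a M N p.1 p.2) •
            (kGen ι K (cls M - cls p.1) i * eGen ι K p.2 i * eGen ι K p.1 (i + 1)))
  | ecomm (M N : ι) (i j : ZMod m) (h1 : i ≠ j) (h2 : i ≠ j + 1) (h3 : j ≠ i + 1) :
      DHmRel m g a cls e s v (eGen ι K M i * eGen ι K N j) (eGen ι K N j * eGen ι K M i)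

/-- The Bridgeland Hall algebra `DH_m(A)` of `m`-cyclic complexes. -/
def DHmAlg (m : ℕ) (g : ι → ι → ι → ℕ) (a : ι → ℕ) (cls : ι → K) (e s : K → K → ℤ)
    (v : ℂ) : Type _ :=
  RingQuot (DHmRel m g a cls e s v)

variable (m : ℕ) (g : ι → ι → ι → ℕ) (a : ι → ℕ) (cls : ι → K) (e s : K → K → ℤ) (v : ℂ)

instance : Ring (DHmAlg m g a cls e s v) := inferInstanceAs (Ring (RingQuot _))
instance : Algebra ℂ (DHmAlg m g a cls e s v) := inferInstanceAs (Algebra ℂ (RingQuot _))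

/-- The generator `e_{M,i}` of `DH_m(A)`. -/
def DHme (M : ι) (i : ZMod m) : DHmAlg m g a cls e s v :=
  RingQuot.mkAlgHom ℂ _ (eGen ι K M i)
/-- The generator `K_{α,i}` of `DH_m(A)`. -/
def DHmk (α : K) (i : ZMod m) : DHmAlg m g a cls e s v :=
  RingQuot.mkAlgHom ℂ _ (kGen ι K α i)

/-!
Under the substitution, each defining relation of `HD(A)` becomes literally a defining relation
of `DH_m(A)` at level `i` or `i + 1`. Because `m = 0` or `m > 2`, the levels `i`, `i + 1`,
`i + 2` are distinct, so `K⁺_α = K_{α,i+1}` and `μ⁻_M = e_{M,i}` fall under the case of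
(4.3) in which they commute. The only point that is not mere bookkeeping is the cross relation:
there the index `cls N - cls Y` of `K⁻` in (2.7) agrees with the index `cls M - cls X` in (4.5)
on every term with `γ^{XY}_{MN} ≠ 0`, because Hall numbers respect classes.
-/

section LinearMapFinsum

variable {R A B γ : Type*} [Semiring R] [IsDomain R] [AddCommMonoid A] [Module R A]
  [Module.IsTorsionFree R A] [AddCommMonoid B] [Module R B] [Module.IsTorsionFree R B]

/-- Both sums have the support of `c`, so they are simultaneously finite sums or both the junk
value `0`. -/
theorem map_finsum_smul_of_ne_zero {F : Type*} [FunLike F A B] [LinearMapClass F R A B]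
    (f : F) (c : γ → R) {x : γ → A}
    (hx : ∀ p, x p ≠ 0) (hfx : ∀ p, f (x p) ≠ 0) :
    f (∑ᶠ p, c p • x p) = ∑ᶠ p, c p • f (x p) := by
  have hsupp : Function.support (fun p => c p • x p) = Function.support c := by
    change Function.support (c • x) = _
    rw [Function.support_smul, Set.eq_univ_of_forall (s := Function.support x) hx, Set.inter_univ]
  have hsupp' : Function.support (fun p => c p • f (x p)) = Function.support c := by
    change Function.support (c • (f ∘ x)) = _
    rw [Function.support_smul, Set.eq_univ_of_forall (s := Function.support (f ∘ x)) hfx,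
      Set.inter_univ]
  by_cases hc : (Function.support c).Finite
  · rw [map_finsum f (by rwa [Function.HasFiniteSupport, hsupp])]
    simp only [map_smul]
  · rw [finsum_of_infinite_support (hsupp ▸ hc), finsum_of_infinite_support (hsupp' ▸ hc),
      map_zero]

end LinearMapFinsum

theorem ZMod.natCast_ne_zero_of_lt {m n : ℕ} (hn : 0 < n) (hm : m = 0 ∨ n < m) :
    (n : ZMod m) ≠ 0 := by
  rw [Ne, ZMod.natCast_eq_zero_iff]
  intro hdvd
  rcases hm with rfl | hnm
  · exact hn.ne' (Nat.eq_zero_of_zero_dvd hdvd)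
  · exact absurd (Nat.le_of_dvd hn hdvd) (not_le.mpr hnm)

theorem exists_of_gammaHall_ne_zero {g : ι → ι → ι → ℕ} {a : ι → ℕ} {M N X Y : ι}
    (h : gammaHall g a M N X Y ≠ 0) : ∃ L, g M L X ≠ 0 ∧ g N Y L ≠ 0 := by
  by_contra! hL
  refine h (mul_eq_zero_of_right _ (finsum_eq_zero_of_forall_eq_zero fun L => ?_))
  by_cases hML : g M L X = 0
  · simp [hML]
  · simp [hL L hML]

theorem cls_sub_eq_of_gammaHall_ne_zero {g : ι → ι → ι → ℕ} {a : ι → ℕ} {cls : ι → K}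
    (hcls : ∀ L M N : ι, g L M N ≠ 0 → cls L = cls M + cls N) {M N X Y : ι}
    (h : gammaHall g a M N X Y ≠ 0) : cls N - cls Y = cls M - cls X := by
  obtain ⟨L, hMLX, hNYL⟩ := exists_of_gammaHall_ne_zero h
  rw [hcls M L X hMLX, hcls N Y L hNYL]
  abel

section FreeMap

variable {m}

section Generators

omit [AddCommGroup K]

def HDGen.toDHmGen (i : ZMod m) : HDGen ι K → DHmGen ι K m
  | .inl (.inl M) => .inl (M, i + 1)
  | .inl (.inr M) => .inl (M, i)
  | .inr (.inl α) => .inr (α, i + 1)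
  | .inr (.inr α) => .inr (α, i)

def freeHDToDHm (i : ZMod m) : FreeAlgebra ℂ (HDGen ι K) →ₐ[ℂ] FreeAlgebra ℂ (DHmGen ι K m) :=
  FreeAlgebra.lift ℂ (FreeAlgebra.ι ℂ ∘ HDGen.toDHmGen i)

@[simp] theorem freeHDToDHm_μp (i : ZMod m) (M : ι) :
    freeHDToDHm (K := K) i (μp ι K M) = eGen ι K M (i + 1) := by
  simp [freeHDToDHm, μp, eGen, HDGen.toDHmGen]

@[simp] theorem freeHDToDHm_μm (i : ZMod m) (M : ι) :
    freeHDToDHm (K := K) i (μm ι K M) = eGen ι K M i := by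
  simp [freeHDToDHm, μm, eGen, HDGen.toDHmGen]

@[simp] theorem freeHDToDHm_κp (i : ZMod m) (α : K) :
    freeHDToDHm (ι := ι) i (κp ι K α) = kGen ι K α (i + 1) := by
  simp [freeHDToDHm, κp, kGen, HDGen.toDHmGen]

@[simp] theorem freeHDToDHm_κm (i : ZMod m) (α : K) :
    freeHDToDHm (ι := ι) i (κm ι K α) = kGen ι K α i := by
  simp [freeHDToDHm, κm, kGen, HDGen.toDHmGen]

theorem μp_ne_zero (M : ι) : μp ι K M ≠ 0 := FreeAlgebra.ι_ne_zero _
theorem μm_ne_zero (M : ι) : μm ι K M ≠ 0 := FreeAlgebra.ι_ne_zero _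
theorem κm_ne_zero (α : K) : κm ι K α ≠ 0 := FreeAlgebra.ι_ne_zero _
theorem eGen_ne_zero (M : ι) (i : ZMod m) : eGen ι K M i ≠ 0 := FreeAlgebra.ι_ne_zero _
theorem kGen_ne_zero (α : K) (i : ZMod m) : kGen ι K α i ≠ 0 := FreeAlgebra.ι_ne_zero _

end Generators

theorem freeHDToDHm_rel_cross (hcls : ∀ L M N : ι, g L M N ≠ 0 → cls L = cls M + cls N)
    (i : ZMod m) (M N : ι) :
    DHmRel m g a cls e s v (freeHDToDHm i (μp ι K M * μm ι K N))
      (freeHDToDHm i (∑ᶠ p : ι × ι,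
        (v ^ e (cls N - cls p.2) (cls p.1 - cls p.2) * gammaHall g a M N p.1 p.2) •
          (κm ι K (cls N - cls p.2) * μm ι K p.2 * μp ι K p.1))) := by
  have hsummand : ∀ p : ι × ι,
      (v ^ e (cls N - cls p.2) (cls p.1 - cls p.2) * gammaHall g a M N p.1 p.2) •
        (kGen ι K (cls N - cls p.2) i * eGen ι K p.2 i * eGen ι K p.1 (i + 1)) =
      (v ^ e (cls M - cls p.1) (cls p.1 - cls p.2) * gammaHall g a M N p.1 p.2) •
        (kGen ι K (cls M - cls p.1) i * eGen ι K p.2 i * eGen ι K p.1 (i + 1)) := by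
    intro p
    by_cases hp : gammaHall g a M N p.1 p.2 = 0
    · simp [hp]
    · rw [cls_sub_eq_of_gammaHall_ne_zero hcls hp]
  have hmonomial : ∀ p : ι × ι, κm ι K (cls N - cls p.2) * μm ι K p.2 * μp ι K p.1 ≠ 0 :=
    fun p => mul_ne_zero (mul_ne_zero (κm_ne_zero _) (μm_ne_zero _)) (μp_ne_zero _)
  have hmonomial' : ∀ p : ι × ι,
      kGen ι K (cls N - cls p.2) i * eGen ι K p.2 i * eGen ι K p.1 (i + 1) ≠ 0 :=
    fun p => mul_ne_zero (mul_ne_zero (kGen_ne_zero _ _) (eGen_ne_zero _ _)) (eGen_ne_zero _ _)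
  rw [map_mul, freeHDToDHm_μp, freeHDToDHm_μm,
    map_finsum_smul_of_ne_zero _ _ hmonomial (by simpa using hmonomial')]
  simp only [map_mul, freeHDToDHm_κm, freeHDToDHm_μm, freeHDToDHm_μp]
  rw [finsum_congr hsummand]
  exact DHmRel.cross M N i

theorem freeHDToDHm_rel (hm : m = 0 ∨ 2 < m) (i : ZMod m)
    (hcls : ∀ L M N : ι, g L M N ≠ 0 → cls L = cls M + cls N) {x y : FreeAlgebra ℂ (HDGen ι K)}
    (h : HDRel g a cls e s v x y) :
    DHmRel m g a cls e s v (freeHDToDHm i x) (freeHDToDHm i y) := by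
  have hsucc : i + 1 ≠ i := by
    simpa using ZMod.natCast_ne_zero_of_lt (n := 1) one_pos (hm.imp_right (by omega))
  have hsucc_succ : i ≠ i + 1 + 1 := by
    simpa [add_assoc, one_add_one_eq_two] using ZMod.natCast_ne_zero_of_lt (n := 2) two_pos hm
  cases h with
  | hallP M N =>
    rw [map_mul, freeHDToDHm_μp, freeHDToDHm_μp, map_finsum_smul_of_ne_zero _ _ μp_ne_zero
      (by simpa using fun L => eGen_ne_zero L (i + 1))]
    simpa only [freeHDToDHm_μp] using DHmRel.hall M N (i + 1)
  | hallM M N =>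
    rw [map_mul, freeHDToDHm_μm, freeHDToDHm_μm, map_finsum_smul_of_ne_zero _ _ μm_ne_zero
      (by simpa using fun L => eGen_ne_zero L i)]
    simpa only [freeHDToDHm_μm] using DHmRel.hall M N i
  | KpMp α M =>
    simp only [map_mul, map_smul, freeHDToDHm_κp, freeHDToDHm_μp]
    exact .Kesame α M (i + 1)
  | KmMm α M =>
    simp only [map_mul, map_smul, freeHDToDHm_κm, freeHDToDHm_μm]
    exact .Kesame α M i
  | KpKp α β =>
    simp only [map_mul, freeHDToDHm_κp]
    exact .KKsame α β (i + 1)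
  | KmKm α β =>
    simp only [map_mul, freeHDToDHm_κm]
    exact .KKsame α β i
  | KpKm α β =>
    simp only [map_mul, map_smul, freeHDToDHm_κp, freeHDToDHm_κm]
    exact .KKup α β (i + 1) i rfl
  | KpMm α M =>
    simp only [map_mul, freeHDToDHm_κp, freeHDToDHm_μm]
    exact .Keother α M (i + 1) i hsucc hsucc_succ
  | KmMp α M =>
    simp only [map_mul, map_smul, freeHDToDHm_κm, freeHDToDHm_μp]
    exact .Kedown α M i (i + 1) rfl
  | cross M N => exact freeHDToDHm_rel_cross g a cls e s v hcls i M N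

def heisenbergToBridgeland (hm : m = 0 ∨ 2 < m) (i : ZMod m)
    (hcls : ∀ L M N : ι, g L M N ≠ 0 → cls L = cls M + cls N) :
    HDAlg g a cls e s v →ₐ[ℂ] DHmAlg m g a cls e s v :=
  RingQuot.liftAlgHom ℂ ⟨(RingQuot.mkAlgHom ℂ _).comp (freeHDToDHm i),
    fun _ _ h => RingQuot.mkAlgHom_rel ℂ (freeHDToDHm_rel g a cls e s v hm i hcls h)⟩

theorem heisenbergToBridgeland_mkAlgHom (hm : m = 0 ∨ 2 < m) (i : ZMod m)
    (hcls : ∀ L M N : ι, g L M N ≠ 0 → cls L = cls M + cls N) (x : FreeAlgebra ℂ (HDGen ι K)) :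
    heisenbergToBridgeland g a cls e s v hm i hcls (RingQuot.mkAlgHom ℂ _ x) =
      RingQuot.mkAlgHom ℂ _ (freeHDToDHm i x) :=
  RingQuot.liftAlgHom_mkAlgHom_apply ℂ _ _ x

end FreeMap

theorem heisenberg_to_bridgeland
    (m : ℕ) (hm : m = 0 ∨ 2 < m) (i : ZMod m)
    (hcls : ∀ L M N : ι, g L M N ≠ 0 → cls L = cls M + cls N) :
    ∃ F : HDAlg g a cls e s v →ₐ[ℂ] DHmAlg m g a cls e s v,
      (∀ α : K, F (HDκp g a cls e s v α) = DHmk m g a cls e s v α (i + 1)) ∧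
      (∀ α : K, F (HDκm g a cls e s v α) = DHmk m g a cls e s v α i) ∧
      (∀ M : ι, F (HDμp g a cls e s v M) = DHme m g a cls e s v M (i + 1)) ∧
      (∀ M : ι, F (HDμm g a cls e s v M) = DHme m g a cls e s v M i) := by
  refine ⟨heisenbergToBridgeland g a cls e s v hm i hcls, fun α => ?_, fun α => ?_,
    fun M => ?_, fun M => ?_⟩ <;>
  simp only [HDκp, HDκm, HDμp, HDμm, heisenbergToBridgeland_mkAlgHom, freeHDToDHm_κp,
    freeHDToDHm_κm, freeHDToDHm_μp, freeHDToDHm_μm] <;> rfl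

end
end

section
/- Let m = 0 or m > 2 and i ∈ Z_m. The assignment 𝒦⁺_α ↦ K_{α,i}, 𝒦⁻_α ↦ K_{α,i+1}, ν⁺_M ↦ e_{M,i}, ν⁻_M ↦ e_{M,i+1} extends to an algebra homomorphism from the dual Heisenberg double Hall algebra ȞD(A) into the Bridgeland Hall algebra DH_m(A). -/
/-!
Both algebras are presented by generators and relations, so it suffices that the assignment on
generators sends every defining relation of `ȞD(A)` to a defining relation of `DH_m(A)`. It does so
literally, except that the cross relation (2.12) becomes (4.4) after swapping the summation indices
`(X, Y) ↦ (Y, X)`, and that `𝒦⁻_α ν⁺_M = ν⁺_M 𝒦⁻_α` needs `K_{α,i+1}` and `e_{M,i}` to commute,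
which holds as soon as `i + 1 ≠ i` and `i ≠ i + 2`, i.e. for `m = 0` or `m > 2`.
-/

noncomputable section

open scoped TensorProduct

variable {ι : Type*} {K : Type*} [AddCommGroup K]

/-- Generators of the dual Heisenberg double Hall algebra: `ν⁺_M`, `ν⁻_M`, `𝒦⁺_α`, `𝒦⁻_α`. -/
abbrev HcDGen (ι K : Type*) := (ι ⊕ ι) ⊕ (K ⊕ K)

variable (ι K) in
/-- `ν⁺_M` as an element of the free algebra. -/
def νp (M : ι) : FreeAlgebra ℂ (HcDGen ι K) := FreeAlgebra.ι ℂ (Sum.inl (Sum.inl M))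
variable (ι K) in
/-- `ν⁻_M` as an element of the free algebra. -/
def νm (M : ι) : FreeAlgebra ℂ (HcDGen ι K) := FreeAlgebra.ι ℂ (Sum.inl (Sum.inr M))
variable (ι K) in
/-- `𝒦⁺_α` as an element of the free algebra. -/
def κcp (α : K) : FreeAlgebra ℂ (HcDGen ι K) := FreeAlgebra.ι ℂ (Sum.inr (Sum.inl α))
variable (ι K) in
/-- `𝒦⁻_α` as an element of the free algebra. -/
def κcm (α : K) : FreeAlgebra ℂ (HcDGen ι K) := FreeAlgebra.ι ℂ (Sum.inr (Sum.inr α))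

/-- The defining relations (2.8)–(2.12) of the dual Heisenberg double Hall
algebra `ȞD(A)`. -/
inductive HcDRel (g : ι → ι → ι → ℕ) (a : ι → ℕ) (cls : ι → K) (e s : K → K → ℤ) (v : ℂ) :
    FreeAlgebra ℂ (HcDGen ι K) → FreeAlgebra ℂ (HcDGen ι K) → Prop
  | hallP (M N : ι) : HcDRel g a cls e s v (νp ι K M * νp ι K N)
      (∑ᶠ L : ι, (v ^ e (cls M) (cls N) * g L M N) • νp ι K L)
  | hallM (M N : ι) : HcDRel g a cls e s v (νm ι K M * νm ι K N)
      (∑ᶠ L : ι, (v ^ e (cls M) (cls N) * g L M N) • νm ι K L)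
  | KpNp (α : K) (M : ι) : HcDRel g a cls e s v (κcp ι K α * νp ι K M)
      (v ^ s α (cls M) • (νp ι K M * κcp ι K α))
  | KmNm (α : K) (M : ι) : HcDRel g a cls e s v (κcm ι K α * νm ι K M)
      (v ^ s α (cls M) • (νm ι K M * κcm ι K α))
  | KpKp (α β : K) : HcDRel g a cls e s v (κcp ι K α * κcp ι K β) (κcp ι K (α + β))
  | KmKm (α β : K) : HcDRel g a cls e s v (κcm ι K α * κcm ι K β) (κcm ι K (α + β))
  | KpKm (α β : K) : HcDRel g a cls e s v (κcp ι K α * κcm ι K β)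
      (v ^ (-s α β) • (κcm ι K β * κcp ι K α))
  | KmNp (α : K) (M : ι) : HcDRel g a cls e s v (κcm ι K α * νp ι K M)
      (νp ι K M * κcm ι K α)
  | KpNm (α : K) (M : ι) : HcDRel g a cls e s v (κcp ι K α * νm ι K M)
      (v ^ (-s α (cls M)) • (νm ι K M * κcp ι K α))
  | cross (N M : ι) : HcDRel g a cls e s v (νm ι K N * νp ι K M)
      (∑ᶠ p : ι × ι,
        (v ^ e (cls N - cls p.2) (cls p.2 - cls p.1) * gammaHall g a N M p.2 p.1) •
          (κcp ι K (cls N - cls p.2) * νp ι K p.1 * νm ι K p.2))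

/-- The dual Heisenberg double Hall algebra `ȞD(A)`. -/
def HcDAlg (g : ι → ι → ι → ℕ) (a : ι → ℕ) (cls : ι → K) (e s : K → K → ℤ) (v : ℂ) : Type _ :=
  RingQuot (HcDRel g a cls e s v)

variable (g : ι → ι → ι → ℕ) (a : ι → ℕ) (cls : ι → K) (e s : K → K → ℤ) (v : ℂ)

instance : Ring (HcDAlg g a cls e s v) := inferInstanceAs (Ring (RingQuot _))
instance : Algebra ℂ (HcDAlg g a cls e s v) := inferInstanceAs (Algebra ℂ (RingQuot _))

/-- The generator `ν⁺_M` of `ȞD(A)`. -/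
def HcDνp (M : ι) : HcDAlg g a cls e s v := RingQuot.mkAlgHom ℂ _ (νp ι K M)
/-- The generator `ν⁻_M` of `ȞD(A)`. -/
def HcDνm (M : ι) : HcDAlg g a cls e s v := RingQuot.mkAlgHom ℂ _ (νm ι K M)
/-- The generator `𝒦⁺_α` of `ȞD(A)`. -/
def HcDκp (α : K) : HcDAlg g a cls e s v := RingQuot.mkAlgHom ℂ _ (κcp ι K α)
/-- The generator `𝒦⁻_α` of `ȞD(A)`. -/
def HcDκm (α : K) : HcDAlg g a cls e s v := RingQuot.mkAlgHom ℂ _ (κcm ι K α)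

variable (m : ℕ) (g : ι → ι → ι → ℕ) (a : ι → ℕ) (cls : ι → K) (e s : K → K → ℤ) (v : ℂ)

theorem Function.support_smul_of_ne_zero {α R M : Type*} [Semiring R] [IsDomain R]
    [AddCommMonoid M] [Module R M] [Module.IsTorsionFree R M] (c : α → R) {y : α → M}
    (hy : ∀ p, y p ≠ 0) : (Function.support fun p => c p • y p) = Function.support c := by
  ext p
  simp [hy p]

/-- If `c` has infinite support, both sides are the junk value `0`. -/
theorem map_finsum_smul_of_map_ne_zero {R A B σ F : Type*} [Semiring R] [IsDomain R]
    [AddCommMonoid A] [Module R A] [AddCommMonoid B] [Module R B] [Module.IsTorsionFree R A]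
    [Module.IsTorsionFree R B] [FunLike F A B] [LinearMapClass F R A B] (f : F)
    (c : σ → R) (x : σ → A) (hx : ∀ p, f (x p) ≠ 0) :
    f (∑ᶠ p, c p • x p) = ∑ᶠ p, c p • f (x p) := by
  by_cases hc : (Function.support c).Finite
  · rw [map_finsum f (f := fun p => c p • x p)
      (hc.subset (Function.support_smul_subset_left c x))]
    simp only [map_smul]
  · have hx' : ∀ p, x p ≠ 0 := fun p h => hx p (by rw [h, map_zero])
    rw [finsum_of_infinite_support (by rwa [Function.support_smul_of_ne_zero c hx']),
      finsum_of_infinite_support (by rwa [Function.support_smul_of_ne_zero c hx]), map_zero]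

theorem ZMod.two_ne_zero_of_eq_zero_or_two_lt {m : ℕ} (hm : m = 0 ∨ 2 < m) :
    (2 : ZMod m) ≠ 0 := by
  rw [← Nat.cast_two, Ne, ZMod.natCast_eq_zero_iff]
  rcases hm with rfl | hm
  · simp
  · exact fun h => two_ne_zero (Nat.eq_zero_of_dvd_of_lt h hm)

section FreeMap

variable {g a cls e s v} {m : ℕ} (i : ZMod m)

variable (ι K) in
def freeHcDToDHm : FreeAlgebra ℂ (HcDGen ι K) →ₐ[ℂ] FreeAlgebra ℂ (DHmGen ι K m) :=
  FreeAlgebra.lift ℂ <| Sum.elim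
    (Sum.elim (fun M => eGen ι K M i) (fun M => eGen ι K M (i + 1)))
    (Sum.elim (fun α => kGen ι K α i) (fun α => kGen ι K α (i + 1)))

omit [AddCommGroup K] in
@[simp] theorem freeHcDToDHm_νp (M : ι) : freeHcDToDHm ι K i (νp ι K M) = eGen ι K M i :=
  FreeAlgebra.lift_ι_apply _ _

omit [AddCommGroup K] in
@[simp] theorem freeHcDToDHm_νm (M : ι) :
    freeHcDToDHm ι K i (νm ι K M) = eGen ι K M (i + 1) :=
  FreeAlgebra.lift_ι_apply _ _

omit [AddCommGroup K] in
@[simp] theorem freeHcDToDHm_κcp (α : K) : freeHcDToDHm ι K i (κcp ι K α) = kGen ι K α i :=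
  FreeAlgebra.lift_ι_apply _ _

omit [AddCommGroup K] in
@[simp] theorem freeHcDToDHm_κcm (α : K) :
    freeHcDToDHm ι K i (κcm ι K α) = kGen ι K α (i + 1) :=
  FreeAlgebra.lift_ι_apply _ _

theorem HcDRel.map_freeHcDToDHm (h2 : (2 : ZMod m) ≠ 0) {x y : FreeAlgebra ℂ (HcDGen ι K)}
    (h : HcDRel g a cls e s v x y) :
    DHmRel m g a cls e s v (freeHcDToDHm ι K i x) (freeHcDToDHm ι K i y) := by
  have succ_ne : i + 1 ≠ i :=
    add_ne_left.mpr fun h1 => h2 (by rw [← one_add_one_eq_two, h1, add_zero])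
  have ne_succ_succ : i ≠ i + 1 + 1 := by
    rw [add_assoc, one_add_one_eq_two]; exact (add_ne_left.mpr h2).symm
  induction h with
  | hallP M N =>
    rw [map_mul, map_finsum_smul_of_map_ne_zero _ _ _ fun _ => by simp [eGen]]
    simpa using DHmRel.hall M N i
  | hallM M N =>
    rw [map_mul, map_finsum_smul_of_map_ne_zero _ _ _ fun _ => by simp [eGen]]
    simpa using DHmRel.hall M N (i + 1)
  | KpNp α M => simpa using DHmRel.Kesame α M i
  | KmNm α M => simpa using DHmRel.Kesame α M (i + 1)
  | KpKp α β => simpa using DHmRel.KKsame α β i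
  | KmKm α β => simpa using DHmRel.KKsame α β (i + 1)
  | KpKm α β => simpa using DHmRel.KKdown α β i (i + 1) rfl
  | KmNp α M => simpa using DHmRel.Keother α M (i + 1) i succ_ne ne_succ_succ
  | KpNm α M => simpa using DHmRel.Kedown α M i (i + 1) rfl
  | cross N M =>
    rw [map_mul, map_finsum_smul_of_map_ne_zero _ _ _ fun _ => by simp [eGen, kGen],
      ← finsum_comp_equiv (Equiv.prodComm ι ι)]
    simpa using DHmRel.cross N M i

end FreeMap

theorem dualHeisenberg_to_bridgeland
    (m : ℕ) (hm : m = 0 ∨ 2 < m) (i : ZMod m) :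
    ∃ F : HcDAlg g a cls e s v →ₐ[ℂ] DHmAlg m g a cls e s v,
      (∀ α : K, F (HcDκp g a cls e s v α) = DHmk m g a cls e s v α i) ∧
      (∀ α : K, F (HcDκm g a cls e s v α) = DHmk m g a cls e s v α (i + 1)) ∧
      (∀ M : ι, F (HcDνp g a cls e s v M) = DHme m g a cls e s v M i) ∧
      (∀ M : ι, F (HcDνm g a cls e s v M) = DHme m g a cls e s v M (i + 1)) := by
  let F := RingQuot.liftAlgHom ℂ
    ⟨(RingQuot.mkAlgHom ℂ (DHmRel m g a cls e s v)).comp (freeHcDToDHm ι K i),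
      fun _ _ h => RingQuot.mkAlgHom_rel ℂ
        (HcDRel.map_freeHcDToDHm i (ZMod.two_ne_zero_of_eq_zero_or_two_lt hm) h)⟩
  have F_mk (x : FreeAlgebra ℂ (HcDGen ι K)) :
      F (RingQuot.mkAlgHom ℂ _ x) = RingQuot.mkAlgHom ℂ _ (freeHcDToDHm ι K i x) :=
    RingQuot.liftAlgHom_mkAlgHom_apply _ _ _ _
  refine ⟨F, fun α => ?_, fun α => ?_, fun M => ?_, fun M => ?_⟩ <;>
    exact (F_mk _).trans (by simp [DHmk, DHme])

end
end

section
/- In the derived Hall algebra DH(A) of the bounded derived category of a finitary hereditary abelian category, the twisted product Z^{[i]}_M * Z^{[j]}_N := v^{(−1)^{i−j}⟨M,N⟩} Z^{[i]}_M Z^{[j]}_N defines an associative multiplication on the underlying vector space, i.e. the twisted derived Hall algebra DH_tw(A) is associative. -/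
noncomputable section

open scoped TensorProduct

variable {ι : Type*} {K : Type*} [AddCommGroup K]

/-- `Z^{[i]}_M` as an element of the free algebra on the generators of the derived
Hall algebra. -/
def ZGen (ι : Type*) (M : ι) (i : ℤ) : FreeAlgebra ℂ (ι × ℤ) := FreeAlgebra.ι ℂ (M, i)

/-- The defining relations (4.6)–(4.8) of the derived Hall algebra `DH(A)` of the
bounded derived category of a finitary hereditary abelian category (`q = v²`). -/
inductive DHRel (g : ι → ι → ι → ℕ) (a : ι → ℕ) (cls : ι → K) (e : K → K → ℤ) (v : ℂ) :
    FreeAlgebra ℂ (ι × ℤ) → FreeAlgebra ℂ (ι × ℤ) → Prop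
  | hall (M N : ι) (i : ℤ) :
      DHRel g a cls e v (ZGen ι M i * ZGen ι N i)
        (∑ᶠ L : ι, (g L M N : ℂ) • ZGen ι L i)
  | cross (M N : ι) (i : ℤ) :
      DHRel g a cls e v (ZGen ι M (i + 1) * ZGen ι N i)
        (∑ᶠ p : ι × ι,
          (v ^ (-2 * e (cls p.2) (cls p.1)) * gammaHall g a M N p.1 p.2) •
            (ZGen ι p.2 i * ZGen ι p.1 (i + 1)))
  | comm (M N : ι) (i j : ℤ) (h : 1 < i - j) :
      DHRel g a cls e v (ZGen ι M i * ZGen ι N j)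
        (v ^ (2 * (((-1 : ℤˣ) ^ (i - j) : ℤˣ) : ℤ) * e (cls N) (cls M)) •
          (ZGen ι N j * ZGen ι M i))

/-- The derived Hall algebra `DH(A)`. -/
def DHAlg (g : ι → ι → ι → ℕ) (a : ι → ℕ) (cls : ι → K) (e : K → K → ℤ) (v : ℂ) : Type _ :=
  RingQuot (DHRel g a cls e v)

variable (g : ι → ι → ι → ℕ) (a : ι → ℕ) (cls : ι → K) (e : K → K → ℤ) (v : ℂ)

instance : Ring (DHAlg g a cls e v) := inferInstanceAs (Ring (RingQuot _))
instance : Algebra ℂ (DHAlg g a cls e v) := inferInstanceAs (Algebra ℂ (RingQuot _))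

/-- The generator `Z^{[i]}_M` of `DH(A)`. -/
def DHZ (M : ι) (i : ℤ) : DHAlg g a cls e v := RingQuot.mkAlgHom ℂ _ (ZGen ι M i)

namespace DHAux



/-- An `AlgHom` maps `finsum` to `finsum` when the support is finite. -/
lemma algHom_map_finsum {R A B α : Type*} [CommSemiring R] [Semiring A] [Semiring B]
    [Algebra R A] [Algebra R B] (F : A →ₐ[R] B) (f : α → A)
    (hf : (Function.support f).Finite) : F (∑ᶠ i, f i) = ∑ᶠ i, F (f i) :=
  AddMonoidHom.map_finsum F.toLinearMap.toAddMonoidHom hf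

lemma single_finsum {R G α : Type*} [Semiring R] [AddMonoid G] (k : G) (f : α → R)
    (hf : (Function.support f).Finite) :
    (AddMonoidAlgebra.single k (∑ᶠ i, f i) : AddMonoidAlgebra R G)
      = ∑ᶠ i, AddMonoidAlgebra.single k (f i) :=
  AddMonoidHom.map_finsum (AddMonoidAlgebra.singleAddHom k) hf

/-- ±1 sign. -/
def sgn (i : ℤ) : ℤ := (((-1 : ℤˣ) ^ i : ℤˣ) : ℤ)

lemma sgn_mul_sgn (i j : ℤ) : sgn i * sgn j = sgn (i - j) := by
  unfold sgn
  rw [← Units.val_mul]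
  congr 1
  rw [zpow_sub, Int.units_inv_eq_self]

lemma sgn_succ (i : ℤ) : sgn (i + 1) = - sgn i := by
  unfold sgn
  rw [zpow_add_one]
  push_cast
  ring

/-- Degree of a generator. -/
def deg (cls : ι → K) (p : ι × ℤ) : K := sgn p.2 • cls p.1

lemma e_zsmul_left (heL : ∀ α β γ' : K, e (α + β) γ' = e α γ' + e β γ')
    (n : ℤ) (α β : K) : e (n • α) β = n * e α β := by
  have := (AddMonoidHom.mk' (fun α => e α β) (fun x y => heL x y β)).map_zsmul n α
  simpa using this

lemma e_zsmul_right (heR : ∀ α β γ' : K, e α (β + γ') = e α β + e α γ')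
    (n : ℤ) (α β : K) : e α (n • β) = n * e α β := by
  have := (AddMonoidHom.mk' (fun β => e α β) (fun x y => heR α x y)).map_zsmul n β
  simpa using this

lemma e_deg_deg (heL : ∀ α β γ' : K, e (α + β) γ' = e α γ' + e β γ')
    (heR : ∀ α β γ' : K, e α (β + γ') = e α β + e α γ') (M N : ι) (i j : ℤ) :
    e (deg cls (M, i)) (deg cls (N, j)) = sgn (i - j) * e (cls M) (cls N) := by
  rw [deg, deg, e_zsmul_left e heL, e_zsmul_right e heR, ← mul_assoc, sgn_mul_sgn]

/-- nonvanishing detector on the free algebra -/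
def aug : FreeAlgebra ℂ (ι × ℤ) →ₐ[ℂ] ℂ := FreeAlgebra.lift ℂ (fun _ => (1 : ℂ))

/-- The comodule structure map on the free algebra. -/
def Fmap : FreeAlgebra ℂ (ι × ℤ) →ₐ[ℂ] AddMonoidAlgebra (DHAlg g a cls e v) K :=
  FreeAlgebra.lift ℂ fun p =>
    AddMonoidAlgebra.single (deg cls p) (DHZ g a cls e v p.1 p.2)

@[simp] lemma Fmap_Z (M : ι) (i : ℤ) :
    Fmap g a cls e v (ZGen ι M i)
      = AddMonoidAlgebra.single (deg cls (M, i)) (DHZ g a cls e v M i) := by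
  simp [Fmap, ZGen, DHZ]

lemma gammaHall_ne_zero_exists {M N X Y : ι} (h : gammaHall g a M N X Y ≠ 0) :
    ∃ L, g M L X ≠ 0 ∧ g N Y L ≠ 0 := by
  by_contra hc
  push_neg at hc
  apply h
  unfold gammaHall
  have : ∀ L : ι, ((a L * g M L X * g N Y L : ℕ) : ℂ) = 0 := by
    intro L
    rcases eq_or_ne (g M L X) 0 with h1 | h1
    · simp [h1]
    · simp [hc L h1]
  rw [finsum_congr this]
  simp

/-- coefficient in the `cross` relation -/
def ccoef (M N : ι) : ι × ι → ℂ := fun p =>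
  v ^ (-2 * e (cls p.2) (cls p.1)) * gammaHall g a M N p.1 p.2

lemma Frel (hcls : ∀ L M N : ι, g L M N ≠ 0 → cls L = cls M + cls N)
    (hgfin : ∀ M N : ι, (Function.support fun L => g L M N).Finite) :
    ∀ ⦃x y : FreeAlgebra ℂ (ι × ℤ)⦄, DHRel g a cls e v x y →
      Fmap g a cls e v x = Fmap g a cls e v y := by
  intro x y hr
  induction hr with
  | hall M N i =>
      have hsupp : (Function.support fun L => (g L M N : ℂ) • ZGen ι L i).Finite := by
        refine (hgfin M N).subset fun L hL => ?_
        simp only [Function.mem_support] at hL ⊢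
        intro h0
        exact hL (by simp [h0])
      have hsupp2 : (Function.support fun L => (g L M N : ℂ) • DHZ g a cls e v L i).Finite := by
        refine (hgfin M N).subset fun L hL => ?_
        simp only [Function.mem_support] at hL ⊢
        intro h0
        exact hL (by simp [h0])
      have hmk : (DHZ g a cls e v M i) * (DHZ g a cls e v N i)
          = ∑ᶠ L : ι, (g L M N : ℂ) • DHZ g a cls e v L i := by
        have h1 := RingQuot.mkAlgHom_rel ℂ (DHRel.hall (g := g) (a := a) (cls := cls)
          (e := e) (v := v) M N i)
        rw [map_mul, algHom_map_finsum _ _ hsupp] at h1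
        have h1' : DHZ g a cls e v M i * DHZ g a cls e v N i = _ := h1
        rw [h1']
        refine finsum_congr fun L => ?_
        simp [DHZ]
        rfl
      rw [map_mul, Fmap_Z, Fmap_Z, AddMonoidAlgebra.single_mul_single,
        algHom_map_finsum _ _ hsupp]
      have hterm : ∀ L : ι, Fmap g a cls e v ((g L M N : ℂ) • ZGen ι L i)
          = AddMonoidAlgebra.single (deg cls (M, i) + deg cls (N, i))
              ((g L M N : ℂ) • DHZ g a cls e v L i) := by
        intro L
        rcases eq_or_ne (g L M N) 0 with h0 | h0
        · simp [h0]
        · rw [map_smul, Fmap_Z, AddMonoidAlgebra.smul_single]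
          congr 1
          simp only [deg, hcls L M N h0, smul_add]
      rw [finsum_congr hterm, ← single_finsum _ _ hsupp2, ← hmk]
  | cross M N i =>
      have hrw : (∑ᶠ p : ι × ι,
            (v ^ (-2 * e (cls p.2) (cls p.1)) * gammaHall g a M N p.1 p.2) •
              (ZGen ι p.2 i * ZGen ι p.1 (i + 1)))
          = ∑ᶠ p : ι × ι, ccoef g a cls e v M N p • (ZGen ι p.2 i * ZGen ι p.1 (i + 1)) := rfl
      have hmk0 := RingQuot.mkAlgHom_rel ℂ (DHRel.cross (g := g) (a := a) (cls := cls)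
          (e := e) (v := v) M N i)
      rw [hrw] at hmk0
      rw [hrw]
      have hdeg : ∀ p : ι × ι, ccoef g a cls e v M N p ≠ 0 →
          deg cls (p.2, i) + deg cls (p.1, i + 1) = deg cls (M, i+1) + deg cls (N, i) := by
        intro p hp
        have hg : gammaHall g a M N p.1 p.2 ≠ 0 := by
          intro h0; apply hp; simp [ccoef, h0]
        obtain ⟨L, h1, h2⟩ := gammaHall_ne_zero_exists g a hg
        have e1 := hcls M L p.1 h1
        have e2 := hcls N p.2 L h2
        simp only [deg, sgn_succ, e1, e2, smul_add, neg_smul]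
        abel
      by_cases hfin : (Function.support (ccoef g a cls e v M N)).Finite
      · have hsupp : (Function.support fun p : ι × ι =>
            ccoef g a cls e v M N p • (ZGen ι p.2 i * ZGen ι p.1 (i + 1))).Finite := by
          refine hfin.subset fun p hp h0 => hp ?_
          simp [h0]
        have hsupp2 : (Function.support fun p : ι × ι =>
            ccoef g a cls e v M N p •
              (DHZ g a cls e v p.2 i * DHZ g a cls e v p.1 (i+1))).Finite := by
          refine hfin.subset fun p hp h0 => hp ?_
          simp [h0]
        have hmk : (DHZ g a cls e v M (i+1)) * (DHZ g a cls e v N i)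
            = ∑ᶠ p : ι × ι, ccoef g a cls e v M N p •
                (DHZ g a cls e v p.2 i * DHZ g a cls e v p.1 (i+1)) := by
          rw [map_mul, algHom_map_finsum _ _ hsupp] at hmk0
          have hmk0' : DHZ g a cls e v M (i+1) * DHZ g a cls e v N i = _ := hmk0
          rw [hmk0']
          refine finsum_congr fun p => ?_
          simp [DHZ]
          rfl
        rw [map_mul, Fmap_Z, Fmap_Z, AddMonoidAlgebra.single_mul_single,
          algHom_map_finsum _ _ hsupp]
        have hterm : ∀ p : ι × ι,
            Fmap g a cls e v (ccoef g a cls e v M N p • (ZGen ι p.2 i * ZGen ι p.1 (i+1)))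
            = AddMonoidAlgebra.single (deg cls (M, i+1) + deg cls (N, i))
                (ccoef g a cls e v M N p •
                  (DHZ g a cls e v p.2 i * DHZ g a cls e v p.1 (i+1))) := by
          intro p
          rcases eq_or_ne (ccoef g a cls e v M N p) 0 with h0 | h0
          · simp [h0]
          · rw [map_smul, map_mul, Fmap_Z, Fmap_Z,
              AddMonoidAlgebra.single_mul_single, AddMonoidAlgebra.smul_single, hdeg p h0]
        rw [finsum_congr hterm, ← single_finsum _ _ hsupp2, ← hmk]
      · -- infinite support: both sides are 0
        have hzero : (∑ᶠ p : ι × ι, ccoef g a cls e v M N p •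
            (ZGen ι p.2 i * ZGen ι p.1 (i + 1))) = 0 := by
          apply finsum_of_infinite_support
          intro hfin2
          apply hfin
          refine hfin2.subset fun p hp h0 => hp ?_
          have h0' : ccoef g a cls e v M N p • (ZGen ι p.2 i * ZGen ι p.1 (i + 1)) = 0 := h0
          have : ccoef g a cls e v M N p
              = aug (ccoef g a cls e v M N p • (ZGen ι p.2 i * ZGen ι p.1 (i + 1))) := by
            simp [aug, ZGen]
          rw [this, h0', map_zero]
        rw [hzero] at hmk0 ⊢
        rw [map_mul, Fmap_Z, Fmap_Z, AddMonoidAlgebra.single_mul_single, map_zero]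
        rw [map_mul, map_zero] at hmk0
        have : (DHZ g a cls e v M (i+1)) * (DHZ g a cls e v N i) = 0 := by
          exact hmk0
        rw [this]
        simp
  | comm M N i j h =>
      have hmk := RingQuot.mkAlgHom_rel ℂ (DHRel.comm (g := g) (a := a) (cls := cls)
          (e := e) (v := v) M N i j h)
      rw [map_mul, map_smul, map_mul] at hmk
      rw [map_mul, map_smul, map_mul, Fmap_Z, Fmap_Z,
        AddMonoidAlgebra.single_mul_single, AddMonoidAlgebra.single_mul_single,
        AddMonoidAlgebra.smul_single, add_comm (deg cls (N, j))]
      have : (DHZ g a cls e v M i) * (DHZ g a cls e v N j)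
          = v ^ (2 * (((-1 : ℤˣ) ^ (i - j) : ℤˣ) : ℤ) * e (cls N) (cls M)) •
              ((DHZ g a cls e v N j) * (DHZ g a cls e v M i)) := by
        exact hmk
      rw [this]


section twisted

variable (hrel : ∀ ⦃x y : FreeAlgebra ℂ (ι × ℤ)⦄, DHRel g a cls e v x y →
  Fmap g a cls e v x = Fmap g a cls e v y)

/-- The comodule structure map on `DH(A)`. -/
def Psi : DHAlg g a cls e v →ₐ[ℂ] AddMonoidAlgebra (DHAlg g a cls e v) K :=
  RingQuot.liftAlgHom ℂ ⟨Fmap g a cls e v, hrel⟩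

lemma Psi_mk (x : FreeAlgebra ℂ (ι × ℤ)) :
    Psi g a cls e v hrel (RingQuot.mkAlgHom ℂ (DHRel g a cls e v) x)
      = Fmap g a cls e v x := by
  unfold Psi
  exact RingQuot.liftAlgHom_mkAlgHom_apply (S := ℂ) (f := Fmap g a cls e v) hrel x

@[simp] lemma Psi_Z (M : ι) (i : ℤ) :
    Psi g a cls e v hrel (DHZ g a cls e v M i)
      = AddMonoidAlgebra.single (deg cls (M, i)) (DHZ g a cls e v M i) := by
  rw [DHZ, Psi_mk, Fmap_Z, DHZ]

/-- tautological decomposition of the monoid algebra -/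
def delta : AddMonoidAlgebra (DHAlg g a cls e v) K →ₐ[ℂ]
    AddMonoidAlgebra (AddMonoidAlgebra (DHAlg g a cls e v) K) K :=
  AddMonoidAlgebra.liftNCAlgHom
    (AddMonoidAlgebra.singleZeroAlgHom.comp AddMonoidAlgebra.singleZeroAlgHom)
    { toFun := fun k => AddMonoidAlgebra.single k.toAdd (AddMonoidAlgebra.single k.toAdd 1)
      map_one' := by
        simp only [toAdd_one]
        rw [← AddMonoidAlgebra.one_def, ← AddMonoidAlgebra.one_def]
      map_mul' := fun k l => by
        simp only [toAdd_mul]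
        rw [AddMonoidAlgebra.single_mul_single, AddMonoidAlgebra.single_mul_single, one_mul] }
    (fun x y => by
      show AddMonoidAlgebra.single (0 : K) (AddMonoidAlgebra.single (0 : K) x) *
            AddMonoidAlgebra.single y.toAdd (AddMonoidAlgebra.single y.toAdd 1)
          = AddMonoidAlgebra.single y.toAdd (AddMonoidAlgebra.single y.toAdd 1) *
            AddMonoidAlgebra.single (0 : K) (AddMonoidAlgebra.single (0 : K) x)
      simp [AddMonoidAlgebra.single_mul_single])

lemma delta_single (k : K) (b : DHAlg g a cls e v) :
    delta g a cls e v (AddMonoidAlgebra.single k b)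
      = AddMonoidAlgebra.single k (AddMonoidAlgebra.single k b) := by
  rw [delta, AddMonoidAlgebra.liftNCAlgHom]
  show AddMonoidAlgebra.liftNC _ _ _ = _
  rw [AddMonoidAlgebra.liftNC_single]
  show AddMonoidAlgebra.single (0 : K) (AddMonoidAlgebra.single (0 : K) b) *
      AddMonoidAlgebra.single k (AddMonoidAlgebra.single k 1) = _
  rw [AddMonoidAlgebra.single_mul_single, AddMonoidAlgebra.single_mul_single,
    zero_add, mul_one]

/-- mapRange along `Psi` -/
def mapPsi : AddMonoidAlgebra (DHAlg g a cls e v) K →ₐ[ℂ]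
    AddMonoidAlgebra (AddMonoidAlgebra (DHAlg g a cls e v) K) K :=
  AddMonoidAlgebra.liftNCAlgHom
    (AddMonoidAlgebra.singleZeroAlgHom.comp (Psi g a cls e v hrel))
    { toFun := fun k => AddMonoidAlgebra.single k.toAdd 1
      map_one' := by
        simp only [toAdd_one]
        rw [← AddMonoidAlgebra.one_def]
      map_mul' := fun k l => by
        simp only [toAdd_mul]
        rw [AddMonoidAlgebra.single_mul_single, one_mul] }
    (fun x y => by
      show AddMonoidAlgebra.single (0 : K) (Psi g a cls e v hrel x) *
            AddMonoidAlgebra.single y.toAdd 1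
          = AddMonoidAlgebra.single y.toAdd 1 *
            AddMonoidAlgebra.single (0 : K) (Psi g a cls e v hrel x)
      simp [AddMonoidAlgebra.single_mul_single])

lemma mapPsi_single (k : K) (b : DHAlg g a cls e v) :
    mapPsi g a cls e v hrel (AddMonoidAlgebra.single k b)
      = AddMonoidAlgebra.single k (Psi g a cls e v hrel b) := by
  rw [mapPsi, AddMonoidAlgebra.liftNCAlgHom]
  show AddMonoidAlgebra.liftNC _ _ _ = _
  rw [AddMonoidAlgebra.liftNC_single]
  show AddMonoidAlgebra.single (0 : K) (Psi g a cls e v hrel b) *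
      AddMonoidAlgebra.single k 1 = _
  rw [AddMonoidAlgebra.single_mul_single, zero_add, mul_one]

lemma delta_eval (f : AddMonoidAlgebra (DHAlg g a cls e v) K) (k : K) :
    (delta g a cls e v f).coeff k = AddMonoidAlgebra.single k (f.coeff k) := by
  classical
  induction f using AddMonoidAlgebra.induction_linear with
  | zero => simp
  | add f h hf hh =>
      rw [map_add, AddMonoidAlgebra.coeff_add, AddMonoidAlgebra.coeff_add, Finsupp.add_apply, Finsupp.add_apply, hf, hh]
      exact (AddMonoidAlgebra.single_add _ _ _).symm
  | single l b =>
      rw [delta_single, AddMonoidAlgebra.coeff_single, AddMonoidAlgebra.coeff_single]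
      rcases eq_or_ne l k with rfl | hne
      · rw [Finsupp.single_eq_same, Finsupp.single_eq_same]
      · rw [Finsupp.single_eq_of_ne hne.symm, Finsupp.single_eq_of_ne hne.symm]
        exact (AddMonoidAlgebra.single_zero _).symm

lemma mapPsi_eval (f : AddMonoidAlgebra (DHAlg g a cls e v) K) (k : K) :
    (mapPsi g a cls e v hrel f).coeff k = Psi g a cls e v hrel (f.coeff k) := by
  classical
  induction f using AddMonoidAlgebra.induction_linear with
  | zero => simp
  | add f h hf hh =>
      rw [map_add, AddMonoidAlgebra.coeff_add, AddMonoidAlgebra.coeff_add, Finsupp.add_apply, Finsupp.add_apply, hf, hh, map_add]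
  | single l b =>
      rw [mapPsi_single, AddMonoidAlgebra.coeff_single, AddMonoidAlgebra.coeff_single]
      rcases eq_or_ne l k with rfl | hne
      · rw [Finsupp.single_eq_same, Finsupp.single_eq_same]
      · rw [Finsupp.single_eq_of_ne hne.symm, Finsupp.single_eq_of_ne hne.symm, map_zero]

/-- Coassociativity: components of `Psi` are homogeneous. -/
lemma Psi_coassoc (x : DHAlg g a cls e v) (k : K) :
    Psi g a cls e v hrel ((Psi g a cls e v hrel x).coeff k)
      = AddMonoidAlgebra.single k ((Psi g a cls e v hrel x).coeff k) := by
  have hcomp : (delta g a cls e v).comp (Psi g a cls e v hrel)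
      = (mapPsi g a cls e v hrel).comp (Psi g a cls e v hrel) := by
    apply RingQuot.ringQuot_ext'
    apply FreeAlgebra.hom_ext
    funext p
    show (delta g a cls e v) (Psi g a cls e v hrel (RingQuot.mkAlgHom ℂ _ (FreeAlgebra.ι ℂ p)))
      = (mapPsi g a cls e v hrel) (Psi g a cls e v hrel (RingQuot.mkAlgHom ℂ _ (FreeAlgebra.ι ℂ p)))
    have : RingQuot.mkAlgHom ℂ (DHRel g a cls e v) (FreeAlgebra.ι ℂ p)
        = DHZ g a cls e v p.1 p.2 := by rw [DHZ, ZGen]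
    rw [this, Psi_Z, delta_single, mapPsi_single, Psi_Z]
  have h1 := AlgHom.congr_fun hcomp x
  simp only [AlgHom.comp_apply] at h1
  have h2 : (delta g a cls e v (Psi g a cls e v hrel x)).coeff k
      = (mapPsi g a cls e v hrel (Psi g a cls e v hrel x)).coeff k := by rw [h1]
  rw [delta_eval, mapPsi_eval] at h2
  exact h2.symm

/-! ### The twisted product -/

/-- inner twisted sum -/
def R2 (y : DHAlg g a cls e v) (k : K) : DHAlg g a cls e v :=
  (Psi g a cls e v hrel y).coeff.sum fun l yl => v ^ (e k l) • yl

/-- the twisted product -/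
def mulFun (x y : DHAlg g a cls e v) : DHAlg g a cls e v :=
  (Psi g a cls e v hrel x).coeff.sum fun k xk => xk * R2 g a cls e v hrel y k

lemma R2_add (y y' : DHAlg g a cls e v) (k : K) :
    R2 g a cls e v hrel (y + y') k = R2 g a cls e v hrel y k + R2 g a cls e v hrel y' k := by
  rw [R2, R2, R2, map_add]
  exact Finsupp.sum_add_index' (fun l => by simp) (fun l b b' => smul_add _ b b')

lemma R2_smul (c : ℂ) (y : DHAlg g a cls e v) (k : K) :
    R2 g a cls e v hrel (c • y) k = c • R2 g a cls e v hrel y k := by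
  rw [R2, R2, map_smul, AddMonoidAlgebra.coeff_smul, Finsupp.sum_smul_index' (fun l => by simp), Finsupp.smul_sum]
  exact Finsupp.sum_congr fun l _ => smul_comm _ c _

lemma mulFun_add_left (x x' y : DHAlg g a cls e v) :
    mulFun g a cls e v hrel (x + x') y
      = mulFun g a cls e v hrel x y + mulFun g a cls e v hrel x' y := by
  rw [mulFun, mulFun, mulFun, map_add]
  exact Finsupp.sum_add_index' (fun k => by simp) (fun k b b' => add_mul b b' _)

lemma mulFun_smul_left (c : ℂ) (x y : DHAlg g a cls e v) :
    mulFun g a cls e v hrel (c • x) y = c • mulFun g a cls e v hrel x y := by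
  rw [mulFun, mulFun, map_smul, AddMonoidAlgebra.coeff_smul, Finsupp.sum_smul_index' (fun k => by simp), Finsupp.smul_sum]
  exact Finsupp.sum_congr fun k _ => smul_mul_assoc c _ _

lemma mulFun_add_right (x y y' : DHAlg g a cls e v) :
    mulFun g a cls e v hrel x (y + y')
      = mulFun g a cls e v hrel x y + mulFun g a cls e v hrel x y' := by
  rw [mulFun, mulFun, mulFun, ← Finsupp.sum_add]
  refine Finsupp.sum_congr fun k _ => ?_
  rw [R2_add, mul_add]

lemma mulFun_smul_right (c : ℂ) (x y : DHAlg g a cls e v) :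
    mulFun g a cls e v hrel x (c • y) = c • mulFun g a cls e v hrel x y := by
  rw [mulFun, mulFun, Finsupp.smul_sum]
  refine Finsupp.sum_congr fun k _ => ?_
  rw [R2_smul, mul_smul_comm]

lemma Psi_mulFun (x y : DHAlg g a cls e v) :
    Psi g a cls e v hrel (mulFun g a cls e v hrel x y)
      = ∑ k ∈ (Psi g a cls e v hrel x).coeff.support, ∑ l ∈ (Psi g a cls e v hrel y).coeff.support,
          v ^ (e k l) • AddMonoidAlgebra.single (k + l)
            ((Psi g a cls e v hrel x).coeff k * (Psi g a cls e v hrel y).coeff l) := by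
  rw [mulFun, Finsupp.sum, map_sum]
  refine Finset.sum_congr rfl fun k _ => ?_
  rw [map_mul, Psi_coassoc, R2, Finsupp.sum, map_sum, Finset.mul_sum]
  refine Finset.sum_congr rfl fun l _ => ?_
  rw [map_smul, Psi_coassoc, mul_smul_comm, AddMonoidAlgebra.single_mul_single]

section assoc

lemma mulFun_assoc_left (hv : v ≠ 0)
    (heL : ∀ α β γ' : K, e (α + β) γ' = e α γ' + e β γ') (x y w : DHAlg g a cls e v) :
    mulFun g a cls e v hrel (mulFun g a cls e v hrel x y) w
      = ∑ k ∈ (Psi g a cls e v hrel x).coeff.support, ∑ l ∈ (Psi g a cls e v hrel y).coeff.support,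
          ∑ n ∈ (Psi g a cls e v hrel w).coeff.support,
            v ^ (e k l + e k n + e l n) •
              ((Psi g a cls e v hrel x).coeff k * (Psi g a cls e v hrel y).coeff l
                * (Psi g a cls e v hrel w).coeff n) := by
  have hL : mulFun g a cls e v hrel (mulFun g a cls e v hrel x y) w
      = (Finsupp.lsum ℂ fun m => LinearMap.mulRight ℂ (R2 g a cls e v hrel w m))
          (Psi g a cls e v hrel (mulFun g a cls e v hrel x y)).coeff := by
    rw [Finsupp.lsum_apply, mulFun]
    exact Finsupp.sum_congr fun k _ => rfl
  rw [hL, Psi_mulFun, AddMonoidAlgebra.coeff_sum, map_sum]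
  refine Finset.sum_congr rfl fun k _ => ?_
  rw [AddMonoidAlgebra.coeff_sum, map_sum]
  refine Finset.sum_congr rfl fun l _ => ?_
  rw [AddMonoidAlgebra.coeff_smul, AddMonoidAlgebra.coeff_single, map_smul, Finsupp.lsum_single, LinearMap.mulRight_apply, R2, Finsupp.mul_sum,
    Finsupp.smul_sum, Finsupp.sum]
  refine Finset.sum_congr rfl fun n _ => ?_
  rw [mul_smul_comm, smul_smul, ← zpow_add₀ hv]
  congr 1
  rw [heL k l n]
  ring

lemma mulFun_assoc_right (hv : v ≠ 0)
    (heR : ∀ α β γ' : K, e α (β + γ') = e α β + e α γ') (x y w : DHAlg g a cls e v) :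
    mulFun g a cls e v hrel x (mulFun g a cls e v hrel y w)
      = ∑ k ∈ (Psi g a cls e v hrel x).coeff.support, ∑ l ∈ (Psi g a cls e v hrel y).coeff.support,
          ∑ n ∈ (Psi g a cls e v hrel w).coeff.support,
            v ^ (e k l + e k n + e l n) •
              ((Psi g a cls e v hrel x).coeff k * (Psi g a cls e v hrel y).coeff l
                * (Psi g a cls e v hrel w).coeff n) := by
  rw [mulFun, Finsupp.sum]
  refine Finset.sum_congr rfl fun k _ => ?_
  have hR : R2 g a cls e v hrel (mulFun g a cls e v hrel y w) k
      = (Finsupp.lsum ℂ fun m => (v ^ (e k m) : ℂ) • (LinearMap.id : DHAlg g a cls e v →ₗ[ℂ]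
          DHAlg g a cls e v)) (Psi g a cls e v hrel (mulFun g a cls e v hrel y w)).coeff := by
    rw [Finsupp.lsum_apply, R2]
    exact Finsupp.sum_congr fun m _ => rfl
  rw [hR, Psi_mulFun, AddMonoidAlgebra.coeff_sum, map_sum, Finset.mul_sum]
  refine Finset.sum_congr rfl fun l _ => ?_
  rw [AddMonoidAlgebra.coeff_sum, map_sum, Finset.mul_sum]
  refine Finset.sum_congr rfl fun n _ => ?_
  rw [AddMonoidAlgebra.coeff_smul, AddMonoidAlgebra.coeff_single, map_smul, Finsupp.lsum_single]
  simp only [LinearMap.smul_apply, LinearMap.id_apply]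
  rw [mul_smul_comm, mul_smul_comm, smul_smul, ← zpow_add₀ hv, ← mul_assoc]
  congr 1
  rw [heR k l n]
  ring

lemma mulFun_assoc (hv : v ≠ 0)
    (heL : ∀ α β γ' : K, e (α + β) γ' = e α γ' + e β γ')
    (heR : ∀ α β γ' : K, e α (β + γ') = e α β + e α γ') (x y w : DHAlg g a cls e v) :
    mulFun g a cls e v hrel (mulFun g a cls e v hrel x y) w
      = mulFun g a cls e v hrel x (mulFun g a cls e v hrel y w) := by
  rw [mulFun_assoc_left g a cls e v hrel hv heL, mulFun_assoc_right g a cls e v hrel hv heR]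

lemma mulFun_Z (heL : ∀ α β γ' : K, e (α + β) γ' = e α γ' + e β γ')
    (heR : ∀ α β γ' : K, e α (β + γ') = e α β + e α γ') (M N : ι) (i j : ℤ) :
    mulFun g a cls e v hrel (DHZ g a cls e v M i) (DHZ g a cls e v N j)
      = v ^ (sgn (i - j) * e (cls M) (cls N)) •
          (DHZ g a cls e v M i * DHZ g a cls e v N j) := by
  rw [mulFun, Psi_Z, AddMonoidAlgebra.coeff_single, Finsupp.sum_single_index (by simp), R2, Psi_Z,
    AddMonoidAlgebra.coeff_single, Finsupp.sum_single_index (by simp), mul_smul_comm, e_deg_deg cls e heL heR]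

end assoc

end twisted

end DHAux

/-- on the underlying vector space of the derived Hall algebra `DH(A)`,
the twisted product `Z^{[i]}_M * Z^{[j]}_N := v^{(−1)^{i−j}⟨M,N⟩} Z^{[i]}_M Z^{[j]}_N`
defines an associative (bilinear) multiplication: the twisted derived Hall algebra
`DH_tw(A)` is associative. -/
theorem twisted_derivedHall_associative [DecidableEq ι]
    (s : K → K → ℤ)
    (z : ι) (hv : v ≠ 0)
    (heL : ∀ α β γ' : K, e (α + β) γ' = e α γ' + e β γ')
    (heR : ∀ α β γ' : K, e α (β + γ') = e α β + e α γ')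
    (hsym : ∀ α β : K, s α β = e α β + e β α)
    (ha : ∀ M : ι, a M ≠ 0)
    (hgfin : ∀ M N : ι, (Function.support fun L => g L M N).Finite)
    (hqfin : ∀ M X : ι, (Function.support fun L => g M L X).Finite)
    (hcls : ∀ L M N : ι, g L M N ≠ 0 → cls L = cls M + cls N)
    (hclsz : cls z = 0)
    (hzl : ∀ L M : ι, g L z M = if L = M then 1 else 0)
    (hzr : ∀ L M : ι, g L M z = if L = M then 1 else 0)
    (hcomp : ∀ L M N P : ι,
      ∑ᶠ X : ι, g L M X * g X N P = ∑ᶠ X : ι, g X M N * g L X P)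
    (hgreen : ∀ M N M' N' : ι,
      ((a M * a N * a M' * a N' : ℕ) : ℂ) *
          ∑ᶠ L : ι, ((g L M N * g L M' N' : ℕ) : ℂ) / ((a L : ℕ) : ℂ) =
        ∑ᶠ q : ι × ι × ι × ι,
          v ^ (-2 * e (cls q.1) (cls q.2.2.2)) *
            ((g M q.1 q.2.1 * g N q.2.2.1 q.2.2.2 * g M' q.1 q.2.2.1 *
              g N' q.2.1 q.2.2.2 : ℕ) : ℂ) *
            ((a q.1 * a q.2.1 * a q.2.2.1 * a q.2.2.2 : ℕ) : ℂ)) :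
    ∃ mul : DHAlg g a cls e v →ₗ[ℂ] DHAlg g a cls e v →ₗ[ℂ] DHAlg g a cls e v,
      (∀ x y w : DHAlg g a cls e v, mul (mul x y) w = mul x (mul y w)) ∧
      (∀ (M N : ι) (i j : ℤ),
        mul (DHZ g a cls e v M i) (DHZ g a cls e v N j) =
          v ^ ((((-1 : ℤˣ) ^ (i - j) : ℤˣ) : ℤ) * e (cls M) (cls N)) •
            (DHZ g a cls e v M i * DHZ g a cls e v N j)) := by
  have hrel := DHAux.Frel g a cls e v hcls hgfin
  refine ⟨LinearMap.mk₂ ℂ (DHAux.mulFun g a cls e v hrel)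
    (DHAux.mulFun_add_left g a cls e v hrel) (DHAux.mulFun_smul_left g a cls e v hrel)
    (DHAux.mulFun_add_right g a cls e v hrel) (DHAux.mulFun_smul_right g a cls e v hrel),
    ?_, ?_⟩
  · intro x y w
    simp only [LinearMap.mk₂_apply]
    exact DHAux.mulFun_assoc g a cls e v hrel hv heL heR x y w
  · intro M N i j
    simp only [LinearMap.mk₂_apply]
    rw [DHAux.mulFun_Z g a cls e v hrel heL heR]
    rfl

end
end
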